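/- Let μ : ℝ → ℂ be a bounded continuous ergodic function with mean M(μ), and let α > 0 satisfy Re(M(μ)) > α. Then there exist constants T₀ > 0 and c > 0 such that: (i) Re(∫_s^t μ(r) dr) < α(t−s) for all s, t ∈ ℝ with s − t > T₀; and (ii) |exp(∫_s^t μ(r) dr)| ≤ c·exp(α(t−s)) for all t, s with s ≥ t ≥ 0. -/

import Mathlib

open MeasureTheory Filter Topology

/-- A bounded continuous function `f : ℝ → ℂ` is ergodic with mean `M` if
`(1/(2T)) ∫_{−T+ξ}^{T+ξ} f(s) ds → M` as `T → ∞`, uniformly with respect to `ξ ∈ ℝ`. -/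
def ErgodicMeanC (f : ℝ → ℂ) (M : ℂ) : Prop :=
  ∀ ε > 0, ∃ T₁ > (0 : ℝ), ∀ T ≥ T₁, ∀ ξ : ℝ,
    ‖(((2 * T : ℝ) : ℂ))⁻¹ * (∫ s in (-T + ξ)..(T + ξ), f s) - M‖ < ε

/-!
Uniform ergodicity says that over every interval `[t, s]` of length at least some `T₀` the
average of `Re μ` exceeds `α`, which is (i) once the orientation of `∫ r in s..t` is flipped.
On the remaining intervals, of length at most `T₀`, `Re ∫_s^t μ - α (t - s)` is bounded by
`(sup ‖μ‖ + α) T₀`, and `c = exp ((sup ‖μ‖ + α) T₀)` gives (ii).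
-/

namespace ErgodicMeanC

variable {f : ℝ → ℂ} {M : ℂ}

theorem exists_re_integral_gt (hf : ErgodicMeanC f M) {ε : ℝ} (hε : 0 < ε) :
    ∃ L > (0 : ℝ), ∀ a b : ℝ, L ≤ b - a → (M.re - ε) * (b - a) < (∫ r in a..b, f r).re := by
  obtain ⟨T₁, hT₁, hclose⟩ := hf ε hε
  refine ⟨2 * T₁, by positivity, fun a b hab => ?_⟩
  have hlen : 0 < b - a := by linarith
  -- The window `[-T + ξ, T + ξ]` centred at `(a + b) / 2` with `T = (b - a) / 2` is `[a, b]`.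
  have hwindow := hclose ((b - a) / 2) (by linarith) ((a + b) / 2)
  rw [show -((b - a) / 2) + (a + b) / 2 = a by ring, show (b - a) / 2 + (a + b) / 2 = b by ring,
    show 2 * ((b - a) / 2) = b - a by ring] at hwindow
  have hre := (abs_lt.mp ((Complex.abs_re_le_norm _).trans_lt hwindow)).1
  rw [Complex.sub_re, ← Complex.ofReal_inv, Complex.re_ofReal_mul] at hre
  have havg : M.re - ε < (∫ r in a..b, f r).re / (b - a) := by
    rw [div_eq_inv_mul]; linarith
  exact (lt_div_iff₀ hlen).mp havg

theorem exists_re_integral_lt (hf : ErgodicMeanC f M) {α : ℝ} (hα : α < M.re) :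
    ∃ L > (0 : ℝ), ∀ s t : ℝ, L < s - t → (∫ r in s..t, f r).re < α * (t - s) := by
  obtain ⟨L, hL, hgt⟩ := hf.exists_re_integral_gt (sub_pos.mpr hα)
  refine ⟨L, hL, fun s t hst => ?_⟩
  have := hgt t s hst.le
  rw [intervalIntegral.integral_symm, Complex.neg_re]
  linarith

end ErgodicMeanC

theorem re_intervalIntegral_le_of_norm_le {f : ℝ → ℂ} {C : ℝ} (hC : ∀ x, ‖f x‖ ≤ C)
    (a b : ℝ) : (∫ r in a..b, f r).re ≤ C * |b - a| :=
  (Complex.re_le_norm _).trans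
    (intervalIntegral.norm_integral_le_of_norm_le_const fun x _ => hC x)

theorem re_intervalIntegral_le_of_forall_lt {f : ℝ → ℂ} {C α L : ℝ} (hC : ∀ x, ‖f x‖ ≤ C)
    (hα : 0 ≤ α) (hL : 0 ≤ L) (hlong : ∀ s t : ℝ, L < s - t → (∫ r in s..t, f r).re < α * (t - s))
    {s t : ℝ} (hts : t ≤ s) :
    (∫ r in s..t, f r).re ≤ (C + α) * L + α * (t - s) := by
  have hC₀ : 0 ≤ C := (norm_nonneg _).trans (hC 0)
  rcases le_or_gt (s - t) L with hshort | hst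
  · have := re_intervalIntegral_le_of_norm_le hC s t
    rw [abs_of_nonpos (by linarith : t - s ≤ 0)] at this
    nlinarith
  · have := hlong s t hst
    have : 0 ≤ (C + α) * L := by positivity
    linarith

theorem ergodic_positive_mean_exponential_estimates_general
    (μ : ℝ → ℂ) (hμb : ∃ C, ∀ t, ‖μ t‖ ≤ C)
    (M : ℂ) (hM : ErgodicMeanC μ M)
    (α : ℝ) (hα : 0 < α) (hMα : M.re > α) :
    ∃ T₀ > (0 : ℝ), ∃ c > (0 : ℝ),
      (∀ s t : ℝ, s - t > T₀ → (∫ r in s..t, μ r).re < α * (t - s)) ∧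
      (∀ s t : ℝ, 0 ≤ t → t ≤ s →
        ‖Complex.exp (∫ r in s..t, μ r)‖ ≤ c * Real.exp (α * (t - s))) := by
  obtain ⟨C, hC⟩ := hμb
  obtain ⟨L, hL, hlong⟩ := hM.exists_re_integral_lt hMα
  refine ⟨L, hL, Real.exp ((C + α) * L), Real.exp_pos _, hlong, fun s t _ hts => ?_⟩
  rw [Complex.norm_exp, ← Real.exp_add, Real.exp_le_exp]
  exact re_intervalIntegral_le_of_forall_lt hC hα.le hL.le hlong hts

theorem ergodic_positive_mean_exponential_estimates
    (μ : ℝ → ℂ) (hμc : Continuous μ) (hμb : ∃ C, ∀ t, ‖μ t‖ ≤ C)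
    (M : ℂ) (hM : ErgodicMeanC μ M)
    (α : ℝ) (hα : 0 < α) (hMα : M.re > α) :
    ∃ T₀ > (0 : ℝ), ∃ c > (0 : ℝ),
      (∀ s t : ℝ, s - t > T₀ → (∫ r in s..t, μ r).re < α * (t - s)) ∧
      (∀ s t : ℝ, 0 ≤ t → t ≤ s →
        ‖Complex.exp (∫ r in s..t, μ r)‖ ≤ c * Real.exp (α * (t - s))) :=
  ergodic_positive_mean_exponential_estimates_general μ hμb M hM α hα hMα
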